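/- arXiv:2410.02793 — 12 statements merged into one kernel-verified Lean document; each statement's English description precedes it below -/
import Mathlib

section
/- Let m > 0, let ξ be a sigmoidal function of class 𝒜(m) with Ψ(x) = ξ(x + m) − ξ(x − m), let a > 0, and let n₁ ≥ 1 be a natural number. Then for every (x, y) ∈ Δ with y < a, ∑_{k=0}^{n₁} Ψ((2 m n₁ / (a − y)) · (x − xₖ)) = 1, where xₖ = (k / n₁)(a − y). -/
theorem partition_of_unity_x (m : ℝ) (hm : 0 < m) (ξ : ℝ → ℝ) (hmono : Monotone ξ)
    (hone : ∀ x : ℝ, m ≤ x → ξ x = 1) (hzero : ∀ x : ℝ, x ≤ -m → ξ x = 0)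
    (Ψ : ℝ → ℝ) (hΨ : ∀ x : ℝ, Ψ x = ξ (x + m) - ξ (x - m))
    (a : ℝ) (ha : 0 < a) (n₁ : ℕ) (hn₁ : 1 ≤ n₁) :
    ∀ x y : ℝ, 0 ≤ x → 0 ≤ y → x + y ≤ a → y < a →
      ∑ k ∈ Finset.range (n₁ + 1),
        Ψ ((2 * m * n₁ / (a - y)) * (x - (k : ℝ) / n₁ * (a - y))) = 1 := by
  intro x y hx hy hxy hya
  have hay : (0:ℝ) < a - y := by linarith
  have hn : (0:ℝ) < (n₁ : ℝ) := by exact_mod_cast hn₁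
  set c : ℝ := 2 * m * n₁ / (a - y) with hc
  have hcpos : 0 < c := by positivity
  set f : ℕ → ℝ := fun k => ξ (c * x - 2 * m * k + m) with hf
  have hterm : ∀ k ∈ Finset.range (n₁ + 1),
      Ψ (c * (x - (k : ℝ) / n₁ * (a - y))) = f k - f (k + 1) := by
    intro k _
    rw [hΨ]
    have h1 : c * (x - (k : ℝ) / n₁ * (a - y)) + m = c * x - 2 * m * k + m := by
      rw [hc]; field_simp
    have h2 : c * (x - (k : ℝ) / n₁ * (a - y)) - m = c * x - 2 * m * (k + 1 : ℕ) + m := by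
      push_cast
      rw [hc]; field_simp; ring
    rw [h1, h2]
  rw [Finset.sum_congr rfl hterm, Finset.sum_range_sub' f]
  have hf0 : f 0 = 1 := by
    apply hone
    have : 0 ≤ c * x := by positivity
    simp [hf]; nlinarith
  have hfn : f (n₁ + 1) = 0 := by
    apply hzero
    have hxle : x ≤ a - y := by linarith
    have : c * x ≤ c * (a - y) := by nlinarith
    have hce : c * (a - y) = 2 * m * n₁ := by
      rw [hc]; field_simp
    push_cast
    nlinarith
  rw [hf0, hfn]; ring
end

section
/- Let m > 0, let ξ be a sigmoidal function of class 𝒜(m) with Ψ(x) = ξ(x + m) − ξ(x − m), let a > 0, let n₁ ≥ 1, and let F : ℝ² → ℝ. Then for every y with 0 ≤ y < a, (S^x_{n₁} F)(0, y) = F(0, y); that is, the operator S^x_{n₁} interpolates F on the edge Γ₂ = {(x, y) ∈ Δ : x = 0} of the triangle (excluding the vertex (0, a), where the value is prescribed by definition). -/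
theorem Sx_interpolates_Gamma2 (m : ℝ) (hm : 0 < m) (ξ : ℝ → ℝ) (hmono : Monotone ξ)
    (hone : ∀ x : ℝ, m ≤ x → ξ x = 1) (hzero : ∀ x : ℝ, x ≤ -m → ξ x = 0)
    (Ψ : ℝ → ℝ) (hΨ : ∀ x : ℝ, Ψ x = ξ (x + m) - ξ (x - m))
    (a : ℝ) (ha : 0 < a) (n₁ : ℕ) (hn₁ : 1 ≤ n₁) (F : ℝ → ℝ → ℝ) :
    ∀ y : ℝ, 0 ≤ y → y < a →
      ∑ k ∈ Finset.range (n₁ + 1),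
        F ((k : ℝ) / n₁ * (a - y)) y *
          Ψ ((2 * m * n₁ / (a - y)) * (0 - (k : ℝ) / n₁ * (a - y))) = F 0 y := by
  intro y hy hya
  have hay : a - y ≠ 0 := sub_ne_zero.mpr (ne_of_gt hya)
  have hn : (n₁ : ℝ) ≠ 0 := Nat.cast_ne_zero.mpr (by omega)
  rw [Finset.sum_eq_single 0]
  · simp only [Nat.cast_zero, zero_div, zero_mul, mul_zero, sub_zero]
    rw [hΨ, zero_add, zero_sub, hone m le_rfl, hzero (-m) le_rfl]; ring
  · intro k _ hk
    have hk1 : (1 : ℝ) ≤ (k : ℝ) := by exact_mod_cast Nat.one_le_iff_ne_zero.mpr hk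
    have harg : 2 * m * n₁ / (a - y) * (0 - (k : ℝ) / n₁ * (a - y)) = -(2 * m * k) := by
      field_simp
      ring
    rw [harg, hΨ]
    have h1 : ξ (-(2 * m * ↑k) + m) = 0 := by
      apply hzero; nlinarith
    have h2 : ξ (-(2 * m * ↑k) - m) = 0 := by
      apply hzero; nlinarith
    rw [h1, h2]; ring
  · intro h; exact absurd (Finset.mem_range.mpr (by omega)) h
end

section
/- Let m > 0, let ξ be a sigmoidal function of class 𝒜(m) with Ψ(x) = ξ(x + m) − ξ(x − m), let a > 0, let n₁ ≥ 1, and let F : ℝ² → ℝ. Then for every (x, y) ∈ Δ with x + y = a and y < a, (S^x_{n₁} F)(x, y) = F(x, y); that is, S^x_{n₁} interpolates F on the hypotenuse Γ₃ = {(x, y) ∈ Δ : x + y = a} (excluding the vertex (0, a), where the value is prescribed by definition). -/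
theorem Sx_interpolates_Gamma3 (m : ℝ) (hm : 0 < m) (ξ : ℝ → ℝ) (hmono : Monotone ξ)
    (hone : ∀ x : ℝ, m ≤ x → ξ x = 1) (hzero : ∀ x : ℝ, x ≤ -m → ξ x = 0)
    (Ψ : ℝ → ℝ) (hΨ : ∀ x : ℝ, Ψ x = ξ (x + m) - ξ (x - m))
    (a : ℝ) (ha : 0 < a) (n₁ : ℕ) (hn₁ : 1 ≤ n₁) (F : ℝ → ℝ → ℝ) :
    ∀ x y : ℝ, 0 ≤ x → 0 ≤ y → x + y = a → y < a →
      ∑ k ∈ Finset.range (n₁ + 1),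
        F ((k : ℝ) / n₁ * (a - y)) y *
          Ψ ((2 * m * n₁ / (a - y)) * (x - (k : ℝ) / n₁ * (a - y))) = F x y := by
  intro x y hx hy hxy hylt
  have hpos : 0 < a - y := by linarith
  have hxa : x = a - y := by linarith
  have hn : (n₁ : ℝ) ≠ 0 := by positivity
  rw [Finset.sum_eq_single_of_mem n₁ (Finset.self_mem_range_succ n₁)]
  · have h1 : (n₁ : ℝ) / n₁ * (a - y) = a - y := by field_simp
    have h2 : (2 * m * n₁ / (a - y)) * (x - (n₁ : ℝ) / n₁ * (a - y)) = 0 := by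
      rw [h1, hxa]; ring
    rw [h2, h1, hΨ, zero_add, zero_sub, hone m le_rfl, hzero (-m) le_rfl, hxa]
    ring
  · intro k hk hkne
    have hklt : k < n₁ := lt_of_le_of_ne (Nat.lt_succ_iff.mp (Finset.mem_range.mp hk)) hkne
    have harg : (2 * m * n₁ / (a - y)) * (x - (k : ℝ) / n₁ * (a - y))
        = 2 * m * ((n₁ : ℝ) - k) := by
      rw [hxa]; field_simp
    have hge : m ≤ 2 * m * ((n₁ : ℝ) - k) - m := by
      have : (1 : ℝ) ≤ (n₁ : ℝ) - k := by
        have := hklt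
        have : (k : ℝ) + 1 ≤ n₁ := by exact_mod_cast hklt
        linarith
      nlinarith
    have hge2 : m ≤ 2 * m * ((n₁ : ℝ) - k) + m := by linarith
    rw [harg, hΨ, hone _ hge2, hone _ hge]
    ring
end

section
/- Let m > 0, let ξ be a sigmoidal function of class 𝒜(m) with Ψ(x) = ξ(x + m) − ξ(x − m), let a > 0, let n₂ ≥ 1, and let F : ℝ² → ℝ. Then for every (x, y) ∈ Δ with x < a such that y = 0 or x + y = a, (S^y_{n₂} F)(x, y) = F(x, y); that is, S^y_{n₂} interpolates F on Γ₁ ∪ Γ₃, where Γ₁ = {(x, y) ∈ Δ : y = 0} and Γ₃ = {(x, y) ∈ Δ : x + y = a} (excluding the vertex (a, 0), where the value is prescribed by definition). -/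
theorem Sy_interpolates_Gamma1_union_Gamma3 (m : ℝ) (hm : 0 < m) (ξ : ℝ → ℝ)
    (hmono : Monotone ξ)
    (hone : ∀ x : ℝ, m ≤ x → ξ x = 1) (hzero : ∀ x : ℝ, x ≤ -m → ξ x = 0)
    (Ψ : ℝ → ℝ) (hΨ : ∀ x : ℝ, Ψ x = ξ (x + m) - ξ (x - m))
    (a : ℝ) (ha : 0 < a) (n₂ : ℕ) (hn₂ : 1 ≤ n₂) (F : ℝ → ℝ → ℝ) :
    ∀ x y : ℝ, 0 ≤ x → 0 ≤ y → x + y ≤ a → x < a → (y = 0 ∨ x + y = a) →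
      ∑ l ∈ Finset.range (n₂ + 1),
        F x ((l : ℝ) / n₂ * (a - x)) *
          Ψ ((2 * m * n₂ / (a - x)) * (y - (l : ℝ) / n₂ * (a - x))) = F x y := by
  intro x y hx hy hxy hxa hcase
  have hax : (0:ℝ) < a - x := by linarith
  have haxne : (a - x) ≠ 0 := ne_of_gt hax
  have hnpos : (0:ℝ) < (n₂ : ℝ) := by exact_mod_cast Nat.lt_of_lt_of_le Nat.zero_lt_one hn₂
  have hnne : (n₂ : ℝ) ≠ 0 := ne_of_gt hnpos
  have hΨ0 : Ψ 0 = 1 := by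
    rw [hΨ]
    rw [show (0:ℝ) + m = m by ring, hone m le_rfl, hzero (0 - m) (by linarith)]
    ring
  have hΨbig : ∀ t : ℝ, 2 * m ≤ |t| → Ψ t = 0 := by
    intro t ht
    rw [hΨ]
    rcases abs_cases t with ⟨h1, _⟩ | ⟨h1, _⟩
    · rw [hone (t + m) (by linarith), hone (t - m) (by linarith)]
      ring
    · rw [hzero (t + m) (by linarith), hzero (t - m) (by linarith)]
      ring
  -- express y as (k / n₂) * (a - x) for k = 0 or k = n₂
  obtain ⟨k, hk, hky⟩ : ∃ k : ℕ, k ∈ Finset.range (n₂ + 1) ∧ y = (k : ℝ) / n₂ * (a - x) := by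
    rcases hcase with h0 | hsum
    · exact ⟨0, by simp, by simp [h0]⟩
    · refine ⟨n₂, by simp, ?_⟩
      rw [div_self hnne, one_mul]
      linarith
  have key : ∀ l : ℕ, (2 * m * n₂ / (a - x)) * (y - (l : ℝ) / n₂ * (a - x))
      = 2 * m * ((k : ℝ) - l) := by
    intro l
    rw [hky]
    field_simp
  rw [Finset.sum_eq_single k]
  · rw [key k, sub_self, mul_zero, hΨ0, mul_one, hky]
  · intro l _ hlk
    rw [key l]
    have h1 : (1:ℝ) ≤ |(k : ℝ) - l| := by
      have : (k : ℝ) - l ≠ 0 := by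
        intro h
        have : (k : ℝ) = l := sub_eq_zero.mp h
        exact hlk (by exact_mod_cast this.symm)
      have hint : ∃ z : ℤ, (k : ℝ) - l = (z : ℝ) := ⟨(k : ℤ) - l, by push_cast; ring⟩
      obtain ⟨z, hz⟩ := hint
      rw [hz] at this ⊢
      have : z ≠ 0 := by exact_mod_cast this
      have : 1 ≤ |z| := Int.one_le_abs this
      calc (1:ℝ) ≤ |(z:ℤ)| := by exact_mod_cast this
        _ = |(z:ℝ)| := by rw [Int.cast_abs]
    have : 2 * m ≤ |2 * m * ((k : ℝ) - l)| := by
      rw [abs_mul, abs_of_pos (by linarith : (0:ℝ) < 2 * m)]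
      nlinarith
    rw [hΨbig _ this, mul_zero]
  · intro h
    exact absurd hk h
end

section
/- Let m > 0, let ξ be a sigmoidal function of class 𝒜(m) with Ψ(x) = ξ(x + m) − ξ(x − m), let a > 0, let n₁ ≥ 1, let F : ℝ² → ℝ, let (x, y) ∈ Δ with y < a, and let ε ≥ 0. If |F(u, y) − F(v, y)| ≤ ε for all u, v ∈ [0, a − y] with |u − v| ≤ (a − y)/n₁, then |(S^x_{n₁} F)(x, y) − F(x, y)| ≤ ε. (In particular, ‖S^x_{n₁} F − F‖ ≤ ω(F(·, y), h₁) with h₁ = (a − y)/n₁, where ω denotes the modulus of continuity of F in its first variable.) -/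
theorem Sx_error_bound (m : ℝ) (hm : 0 < m) (ξ : ℝ → ℝ) (hmono : Monotone ξ)
    (hone : ∀ x : ℝ, m ≤ x → ξ x = 1) (hzero : ∀ x : ℝ, x ≤ -m → ξ x = 0)
    (Ψ : ℝ → ℝ) (hΨ : ∀ x : ℝ, Ψ x = ξ (x + m) - ξ (x - m))
    (a : ℝ) (ha : 0 < a) (n₁ : ℕ) (hn₁ : 1 ≤ n₁) (F : ℝ → ℝ → ℝ)
    (x y : ℝ) (hx : 0 ≤ x) (hy : 0 ≤ y) (hxy : x + y ≤ a) (hya : y < a)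
    (ε : ℝ) (hε : 0 ≤ ε)
    (hmod : ∀ u ∈ Set.Icc (0 : ℝ) (a - y), ∀ v ∈ Set.Icc (0 : ℝ) (a - y),
      |u - v| ≤ (a - y) / n₁ → |F u y - F v y| ≤ ε) :
    |(∑ k ∈ Finset.range (n₁ + 1),
        F ((k : ℝ) / n₁ * (a - y)) y *
          Ψ ((2 * m * n₁ / (a - y)) * (x - (k : ℝ) / n₁ * (a - y)))) - F x y| ≤ ε := by
  have hn : (0:ℝ) < (n₁ : ℝ) := by exact_mod_cast hn₁
  set h := a - y with hdef
  have hh : 0 < h := by simp only [hdef]; linarith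
  set c := 2 * m * (n₁:ℝ) / h with hc
  have hcpos : 0 < c := by positivity
  have hΨ0 : ∀ t, 0 ≤ Ψ t := by
    intro t; rw [hΨ]
    have := hmono (show t - m ≤ t + m by linarith)
    linarith
  have hΨz : ∀ t, 2*m ≤ |t| → Ψ t = 0 := by
    intro t ht
    rw [hΨ]
    rcases abs_cases t with ⟨h1, h2⟩ | ⟨h1, h2⟩
    · rw [hone (t+m) (by linarith), hone (t-m) (by linarith)]; ring
    · rw [hzero (t+m) (by linarith), hzero (t-m) (by linarith)]; ring
  have harg : ∀ k : ℕ, (2 * m * (n₁:ℝ) / h) * (x - (k:ℝ)/(n₁:ℝ)*h) = c*x - 2*m*k := by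
    intro k; rw [hc]; field_simp
  have hxh : x ≤ h := by simp only [hdef]; linarith
  have hcx : c * x ≤ 2*m*(n₁:ℝ) := by
    rw [hc, div_mul_eq_mul_div, div_le_iff₀ hh]
    nlinarith [mul_le_mul_of_nonneg_left hxh (by positivity : (0:ℝ) ≤ 2*m*(n₁:ℝ))]
  have htel : ∑ k ∈ Finset.range (n₁+1), Ψ (c*x - 2*m*k) = 1 := by
    have key : ∀ k : ℕ, Ψ (c*x - 2*m*k)
        = (fun j : ℕ => ξ (c*x - 2*m*j + m)) k - (fun j : ℕ => ξ (c*x - 2*m*j + m)) (k+1) := by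
      intro k
      simp only [hΨ]
      have e2 : c*x - 2*m*(k:ℝ) - m = c*x - 2*m*((k:ℕ)+1:ℕ) + m := by push_cast; ring
      rw [e2]
    calc ∑ k ∈ Finset.range (n₁+1), Ψ (c*x - 2*m*k)
        = ∑ k ∈ Finset.range (n₁+1),
            ((fun j : ℕ => ξ (c*x - 2*m*j + m)) k - (fun j : ℕ => ξ (c*x - 2*m*j + m)) (k+1)) :=
          Finset.sum_congr rfl (fun k _ => key k)
      _ = (fun j : ℕ => ξ (c*x - 2*m*j + m)) 0 - (fun j : ℕ => ξ (c*x - 2*m*j + m)) (n₁+1) :=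
          Finset.sum_range_sub' _ (n₁+1)
      _ = 1 := by
          simp only []
          have e0 : c*x - 2*m*((0:ℕ):ℝ) + m = c*x + m := by push_cast; ring
          rw [e0, hone (c*x+m) (by nlinarith),
            hzero (c*x - 2*m*((n₁+1:ℕ):ℝ) + m) (by push_cast; nlinarith)]
          ring
  have hsum : (∑ k ∈ Finset.range (n₁+1),
      F ((k:ℝ)/(n₁:ℝ)*h) y * Ψ ((2*m*(n₁:ℝ)/h)*(x - (k:ℝ)/(n₁:ℝ)*h)))
      = ∑ k ∈ Finset.range (n₁+1), F ((k:ℝ)/(n₁:ℝ)*h) y * Ψ (c*x - 2*m*k) :=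
    Finset.sum_congr rfl (fun k _ => by rw [harg k])
  rw [hsum]
  have hFx : F x y = ∑ k ∈ Finset.range (n₁+1), F x y * Ψ (c*x - 2*m*k) := by
    rw [← Finset.mul_sum, htel, mul_one]
  rw [hFx, ← Finset.sum_sub_distrib]
  calc |∑ k ∈ Finset.range (n₁+1),
          (F ((k:ℝ)/(n₁:ℝ)*h) y * Ψ (c*x - 2*m*k) - F x y * Ψ (c*x - 2*m*k))|
      ≤ ∑ k ∈ Finset.range (n₁+1),
          |F ((k:ℝ)/(n₁:ℝ)*h) y * Ψ (c*x - 2*m*k) - F x y * Ψ (c*x - 2*m*k)| :=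
        Finset.abs_sum_le_sum_abs _ _
    _ ≤ ∑ k ∈ Finset.range (n₁+1), ε * Ψ (c*x - 2*m*k) := by
        apply Finset.sum_le_sum
        intro k hk
        rw [← sub_mul, abs_mul, abs_of_nonneg (hΨ0 _)]
        by_cases hcase : 2*m ≤ |c*x - 2*m*(k:ℝ)|
        · rw [hΨz _ hcase]; simp
        · push_neg at hcase
          have hk' : (k:ℝ) ≤ (n₁:ℝ) := by
            exact_mod_cast Nat.lt_succ_iff.mp (Finset.mem_range.mp hk)
          have hmem1 : (k:ℝ)/(n₁:ℝ)*h ∈ Set.Icc (0:ℝ) h := by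
            have hd1 : (k:ℝ)/(n₁:ℝ) ≤ 1 := (div_le_one hn).mpr hk'
            constructor
            · positivity
            · nlinarith
          have hmem2 : x ∈ Set.Icc (0:ℝ) h := ⟨hx, hxh⟩
          have hdist : |(k:ℝ)/(n₁:ℝ)*h - x| ≤ h/(n₁:ℝ) := by
            have e : c*x - 2*m*(k:ℝ) = c*(x - (k:ℝ)/(n₁:ℝ)*h) := by
              rw [← harg k, hc]
            rw [e, abs_mul, abs_of_pos hcpos] at hcase
            have : |x - (k:ℝ)/(n₁:ℝ)*h| < 2*m/c := (lt_div_iff₀' hcpos).mpr hcase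
            have e2 : 2*m/c = h/(n₁:ℝ) := by rw [hc]; field_simp
            rw [abs_sub_comm]
            linarith [this, e2 ▸ this]
          exact mul_le_mul_of_nonneg_right (hmod _ hmem1 x hmem2 hdist) (hΨ0 _)
    _ = ε * 1 := by rw [← Finset.mul_sum, htel]
    _ = ε := mul_one ε
end

section
/- Let m > 0, let ξ be a sigmoidal function of class 𝒜(m) with Ψ(x) = ξ(x + m) − ξ(x − m), let a > 0, let n₂ ≥ 1, let F : ℝ² → ℝ, let (x, y) ∈ Δ with x < a, and let ε ≥ 0. If |F(x, u) − F(x, v)| ≤ ε for all u, v ∈ [0, a − x] with |u − v| ≤ (a − x)/n₂, then |(S^y_{n₂} F)(x, y) − F(x, y)| ≤ ε. (In particular, ‖S^y_{n₂} F − F‖ ≤ ω(F(x, ·), h₂) with h₂ = (a − x)/n₂, where ω denotes the modulus of continuity of F in its second variable.) -/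
/-!
`Ψ(t) = ξ(t + m) - ξ(t - m)` is nonnegative, vanishes for `|t| ≥ 2m`, and its translates by
multiples of `2m` telescope, so on the rescaled grid the weights `Ψ(c (y - y_l))` form a partition
of unity in which only nodes `y_l` within one mesh width `(a - x)/n₂` of `y` carry weight. The
operator is therefore a convex combination of values `F(x, y_l)` each within `ε` of `F(x, y)`.
-/

open Finset

theorem abs_sum_mul_sub_le_of_sum_eq_one {ι : Type*} (s : Finset ι) (f w : ι → ℝ) (c ε : ℝ)
    (hw : ∀ i ∈ s, 0 ≤ w i) (hsum : ∑ i ∈ s, w i = 1)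
    (hf : ∀ i ∈ s, w i ≠ 0 → |f i - c| ≤ ε) :
    |∑ i ∈ s, f i * w i - c| ≤ ε := by
  have hterm : ∀ i ∈ s, |(f i - c) * w i| ≤ ε * w i := by
    intro i hi
    rw [abs_mul, abs_of_nonneg (hw i hi)]
    rcases eq_or_ne (w i) 0 with h | h
    · simp [h]
    · exact mul_le_mul_of_nonneg_right (hf i hi h) (hw i hi)
  calc |∑ i ∈ s, f i * w i - c| = |∑ i ∈ s, (f i - c) * w i| := by
        simp only [sub_mul, sum_sub_distrib, ← mul_sum, hsum, mul_one]
    _ ≤ ∑ i ∈ s, |(f i - c) * w i| := abs_sum_le_sum_abs _ _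
    _ ≤ ∑ i ∈ s, ε * w i := sum_le_sum hterm
    _ = ε := by rw [← mul_sum, hsum, mul_one]

def sigmoidBump (ξ : ℝ → ℝ) (m t : ℝ) : ℝ := ξ (t + m) - ξ (t - m)

section SigmoidBump

variable {ξ : ℝ → ℝ} {m : ℝ}

theorem sigmoidBump_nonneg (hmono : Monotone ξ) (hm : 0 ≤ m) (t : ℝ) :
    0 ≤ sigmoidBump ξ m t :=
  sub_nonneg.mpr (hmono (by linarith))

theorem sigmoidBump_eq_zero_of_le_abs (hm : 0 ≤ m) (hone : ∀ x, m ≤ x → ξ x = 1)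
    (hzero : ∀ x, x ≤ -m → ξ x = 0) {t : ℝ} (ht : 2 * m ≤ |t|) : sigmoidBump ξ m t = 0 := by
  rcases le_abs.mp ht with h | h
  · rw [sigmoidBump, hone (t + m) (by linarith), hone (t - m) (by linarith), sub_self]
  · rw [sigmoidBump, hzero (t + m) (by linarith), hzero (t - m) (by linarith), sub_self]

theorem abs_lt_of_sigmoidBump_ne_zero (hm : 0 ≤ m) (hone : ∀ x, m ≤ x → ξ x = 1)
    (hzero : ∀ x, x ≤ -m → ξ x = 0) {t : ℝ} (ht : sigmoidBump ξ m t ≠ 0) : |t| < 2 * m :=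
  not_le.mp fun h => ht (sigmoidBump_eq_zero_of_le_abs hm hone hzero h)

theorem sum_range_sigmoidBump_sub_mul (hone : ∀ x, m ≤ x → ξ x = 1)
    (hzero : ∀ x, x ≤ -m → ξ x = 0) (n : ℕ) {s : ℝ} (hs₀ : 0 ≤ s) (hs : s ≤ 2 * m * n) :
    ∑ l ∈ range (n + 1), sigmoidBump ξ m (s - 2 * m * l) = 1 := by
  have htelescope : ∀ l : ℕ, sigmoidBump ξ m (s - 2 * m * l)
      = ξ (s - 2 * m * l + m) - ξ (s - 2 * m * (l + 1 : ℕ) + m) := by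
    intro l
    rw [sigmoidBump]
    push_cast
    ring_nf
  rw [sum_congr rfl fun l _ => htelescope l, sum_range_sub']
  rw [hone _ (by push_cast; linarith), hzero _ (by push_cast; linarith), sub_zero]

end SigmoidBump

theorem Sy_error_bound_general (m : ℝ) (hm : 0 < m) (ξ : ℝ → ℝ) (hmono : Monotone ξ)
    (hone : ∀ x : ℝ, m ≤ x → ξ x = 1) (hzero : ∀ x : ℝ, x ≤ -m → ξ x = 0)
    (Ψ : ℝ → ℝ) (hΨ : ∀ x : ℝ, Ψ x = ξ (x + m) - ξ (x - m))
    (a : ℝ) (n₂ : ℕ) (hn₂ : 1 ≤ n₂) (F : ℝ → ℝ → ℝ)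
    (x y : ℝ) (hy : 0 ≤ y) (hxy : x + y ≤ a) (hxa : x < a)
    (ε : ℝ)
    (hmod : ∀ u ∈ Set.Icc (0 : ℝ) (a - x), ∀ v ∈ Set.Icc (0 : ℝ) (a - x),
      |u - v| ≤ (a - x) / n₂ → |F x u - F x v| ≤ ε) :
    |(∑ l ∈ Finset.range (n₂ + 1),
        F x ((l : ℝ) / n₂ * (a - x)) *
          Ψ ((2 * m * n₂ / (a - x)) * (y - (l : ℝ) / n₂ * (a - x)))) - F x y| ≤ ε := by
  obtain rfl : Ψ = sigmoidBump ξ m := funext hΨ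
  have hax : 0 < a - x := sub_pos.mpr hxa
  have hn : (0 : ℝ) < n₂ := by exact_mod_cast hn₂
  set c := 2 * m * n₂ / (a - x)
  have hc : 0 < c := by positivity
  have hcmul : c * (a - x) = 2 * m * n₂ := div_mul_cancel₀ _ hax.ne'
  have hmesh : (a - x) / n₂ = 2 * m / c := by
    rw [eq_div_iff hc.ne', div_mul_eq_mul_div, mul_comm, hcmul]
    field_simp
  have harg : ∀ l : ℕ, c * (y - l / n₂ * (a - x)) = c * y - 2 * m * l := by
    intro l
    rw [mul_sub, mul_left_comm, hcmul]
    field_simp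
  apply abs_sum_mul_sub_le_of_sum_eq_one
  · exact fun l _ => sigmoidBump_nonneg hmono hm.le _
  · simp only [harg]
    refine sum_range_sigmoidBump_sub_mul hone hzero n₂ (by positivity) ?_
    calc c * y ≤ c * (a - x) := by gcongr; linarith
      _ = 2 * m * n₂ := hcmul
  · intro l hl hne
    have hnode : (l : ℝ) / n₂ ≤ 1 :=
      div_le_one_of_le₀ (by exact_mod_cast mem_range_succ_iff.mp hl) hn.le
    have hnear : c * |y - l / n₂ * (a - x)| < 2 * m := by
      simpa [abs_mul, abs_of_pos hc] using abs_lt_of_sigmoidBump_ne_zero hm.le hone hzero hne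
    refine hmod _ ⟨by positivity, mul_le_of_le_one_left hax.le hnode⟩ _ ⟨hy, by linarith⟩ ?_
    rw [abs_sub_comm, hmesh, le_div_iff₀ hc, mul_comm]
    exact hnear.le

theorem Sy_error_bound (m : ℝ) (hm : 0 < m) (ξ : ℝ → ℝ) (hmono : Monotone ξ)
    (hone : ∀ x : ℝ, m ≤ x → ξ x = 1) (hzero : ∀ x : ℝ, x ≤ -m → ξ x = 0)
    (Ψ : ℝ → ℝ) (hΨ : ∀ x : ℝ, Ψ x = ξ (x + m) - ξ (x - m))
    (a : ℝ) (ha : 0 < a) (n₂ : ℕ) (hn₂ : 1 ≤ n₂) (F : ℝ → ℝ → ℝ)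
    (x y : ℝ) (hx : 0 ≤ x) (hy : 0 ≤ y) (hxy : x + y ≤ a) (hxa : x < a)
    (ε : ℝ) (hε : 0 ≤ ε)
    (hmod : ∀ u ∈ Set.Icc (0 : ℝ) (a - x), ∀ v ∈ Set.Icc (0 : ℝ) (a - x),
      |u - v| ≤ (a - x) / n₂ → |F x u - F x v| ≤ ε) :
    |(∑ l ∈ Finset.range (n₂ + 1),
        F x ((l : ℝ) / n₂ * (a - x)) *
          Ψ ((2 * m * n₂ / (a - x)) * (y - (l : ℝ) / n₂ * (a - x)))) - F x y| ≤ ε :=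
  Sy_error_bound_general m hm ξ hmono hone hzero Ψ hΨ a n₂ hn₂ F x y hy hxy hxa ε hmod
end

section
/- Let m > 0, let ξ be a sigmoidal function of class 𝒜(m) with Ψ(x) = ξ(x + m) − ξ(x − m), let a > 0, let n₁, n₂ ≥ 1, and let F : ℝ² → ℝ. Then for every (x, y) ∈ Δ with x + y = a, 0 < x < a and 0 < y < a, (P_{n₁,n₂} F)(x, y) = F(x, y); that is, the bivariate operator P_{n₁,n₂} interpolates F on the hypotenuse Γ₃ = {(x, y) ∈ Δ : x + y = a} (away from the vertices). -/
theorem P_interpolates_Gamma3 (m : ℝ) (hm : 0 < m) (ξ : ℝ → ℝ) (hmono : Monotone ξ)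
    (hone : ∀ x : ℝ, m ≤ x → ξ x = 1) (hzero : ∀ x : ℝ, x ≤ -m → ξ x = 0)
    (Ψ : ℝ → ℝ) (hΨ : ∀ x : ℝ, Ψ x = ξ (x + m) - ξ (x - m))
    (a : ℝ) (ha : 0 < a) (n₁ n₂ : ℕ) (hn₁ : 1 ≤ n₁) (hn₂ : 1 ≤ n₂) (F : ℝ → ℝ → ℝ) :
    ∀ x y : ℝ, 0 < x → x < a → 0 < y → y < a → x + y = a →
      ∑ k ∈ Finset.range (n₁ + 1), ∑ l ∈ Finset.range (n₂ + 1),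
        F ((k : ℝ) / n₁ * (a - y)) ((l : ℝ) / n₂ * (a - x)) *
          Ψ ((2 * m * n₁ / (a - y)) * (x - (k : ℝ) / n₁ * (a - y))) *
          Ψ ((2 * m * n₂ / (a - x)) * (y - (l : ℝ) / n₂ * (a - x))) = F x y := by
  intro x y hx hxa hy hya hxy
  have hx0 : x ≠ 0 := ne_of_gt hx
  have hy0 : y ≠ 0 := ne_of_gt hy
  have hn₁0 : (n₁ : ℝ) ≠ 0 := Nat.cast_ne_zero.2 (by omega)
  have hn₂0 : (n₂ : ℝ) ≠ 0 := Nat.cast_ne_zero.2 (by omega)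
  have hay : a - y = x := by linarith
  have hax : a - x = y := by linarith
  have hΨ1 : Ψ 0 = 1 := by
    rw [hΨ, zero_add, zero_sub, hone m le_rfl, hzero (-m) le_rfl]; ring
  have hΨ0 : ∀ t : ℝ, 2 * m ≤ t → Ψ t = 0 := by
    intro t ht
    rw [hΨ, hone (t + m) (by linarith), hone (t - m) (by linarith)]; ring
  have harg : ∀ (n : ℕ), (n : ℝ) ≠ 0 → ∀ t : ℝ, t ≠ 0 → ∀ k : ℕ,
      2 * m * n / t * (t - (k : ℝ) / n * t) = 2 * m * ((n : ℝ) - k) := by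
    intro n hn t ht k; field_simp
  have hbig : ∀ (n k : ℕ), k < n → 2 * m ≤ 2 * m * ((n : ℝ) - k) := by
    intro n k hk
    have h1 : (k : ℝ) + 1 ≤ n := by exact_mod_cast Nat.succ_le_of_lt hk
    nlinarith
  rw [hay, hax]
  rw [Finset.sum_eq_single_of_mem n₁ (Finset.self_mem_range_succ n₁) (by
    intro k hk hkn
    apply Finset.sum_eq_zero
    intro l _
    rw [harg n₁ hn₁0 x hx0, hΨ0 _ (hbig n₁ k (by
      have := Finset.mem_range.1 hk; omega))]
    ring)]
  rw [Finset.sum_eq_single_of_mem n₂ (Finset.self_mem_range_succ n₂) (by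
    intro l hl hln
    rw [harg n₂ hn₂0 y hy0, hΨ0 _ (hbig n₂ l (by
      have := Finset.mem_range.1 hl; omega))]
    ring)]
  rw [harg n₁ hn₁0 x hx0, harg n₂ hn₂0 y hy0]
  simp only [sub_self, mul_zero, hΨ1, mul_one]
  rw [div_self hn₁0, div_self hn₂0, one_mul, one_mul]
end

section
/- Let m > 0, let ξ be a sigmoidal function of class 𝒜(m) with Ψ(x) = ξ(x + m) − ξ(x − m), let a > 0, let n₁, n₂ ≥ 1, and let F : ℝ² → ℝ. Then for every x with 0 ≤ x < a, (P_{n₁,n₂} F)(x, 0) = (S^x_{n₁} F)(x, 0); that is, P_{n₁,n₂} F and S^x_{n₁} F agree on the edge Γ₁ = {(x, y) ∈ Δ : y = 0}. -/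
theorem P_agrees_Sx_on_Gamma1 (m : ℝ) (hm : 0 < m) (ξ : ℝ → ℝ) (hmono : Monotone ξ)
    (hone : ∀ x : ℝ, m ≤ x → ξ x = 1) (hzero : ∀ x : ℝ, x ≤ -m → ξ x = 0)
    (Ψ : ℝ → ℝ) (hΨ : ∀ x : ℝ, Ψ x = ξ (x + m) - ξ (x - m))
    (a : ℝ) (ha : 0 < a) (n₁ n₂ : ℕ) (hn₁ : 1 ≤ n₁) (hn₂ : 1 ≤ n₂) (F : ℝ → ℝ → ℝ) :
    ∀ x : ℝ, 0 ≤ x → x < a →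
      ∑ k ∈ Finset.range (n₁ + 1), ∑ l ∈ Finset.range (n₂ + 1),
        F ((k : ℝ) / n₁ * (a - 0)) ((l : ℝ) / n₂ * (a - x)) *
          Ψ ((2 * m * n₁ / (a - 0)) * (x - (k : ℝ) / n₁ * (a - 0))) *
          Ψ ((2 * m * n₂ / (a - x)) * (0 - (l : ℝ) / n₂ * (a - x)))
      = ∑ k ∈ Finset.range (n₁ + 1),
          F ((k : ℝ) / n₁ * (a - 0)) 0 *
            Ψ ((2 * m * n₁ / (a - 0)) * (x - (k : ℝ) / n₁ * (a - 0))) := by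
  intro x hx hxa
  have hax : (0:ℝ) < a - x := by linarith
  have hax' : (a - x) ≠ 0 := ne_of_gt hax
  have hn₂' : (n₂ : ℝ) ≠ 0 := by positivity
  refine Finset.sum_congr rfl ?_
  intro k _
  rw [Finset.sum_eq_single_of_mem 0 (by simp)]
  · have harg : (2 * m * n₂ / (a - x)) * (0 - (0:ℕ) / (n₂:ℝ) * (a - x)) = 0 := by
      simp
    rw [harg]
    have hΨ0 : Ψ 0 = 1 := by
      rw [hΨ]
      rw [hone (0+m) (by linarith), hzero (0-m) (by linarith)]
      norm_num
    simp [hΨ0]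
  · intro l _ hl
    have hl1 : (1:ℝ) ≤ (l:ℝ) := by exact_mod_cast Nat.one_le_iff_ne_zero.mpr hl
    have harg : (2 * m * n₂ / (a - x)) * (0 - (l:ℝ) / n₂ * (a - x)) = -(2 * m * l) := by
      field_simp
      ring
    rw [harg]
    have h1 : ξ (-(2 * m * l) + m) = 0 := by
      apply hzero; nlinarith
    have h2 : ξ (-(2 * m * l) - m) = 0 := by
      apply hzero; nlinarith
    rw [hΨ (-(2 * m * l)), h1, h2]
    ring
end

section
/- Let m > 0, let ξ be a sigmoidal function of class 𝒜(m) with Ψ(x) = ξ(x + m) − ξ(x − m), let a > 0, let n₁, n₂ ≥ 1, and let F : ℝ² → ℝ. Then for every y with 0 ≤ y < a, (P_{n₁,n₂} F)(0, y) = (S^y_{n₂} F)(0, y); that is, P_{n₁,n₂} F and S^y_{n₂} F agree on the edge Γ₂ = {(x, y) ∈ Δ : x = 0}. -/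
theorem P_agrees_Sy_on_Gamma2 (m : ℝ) (hm : 0 < m) (ξ : ℝ → ℝ) (hmono : Monotone ξ)
    (hone : ∀ x : ℝ, m ≤ x → ξ x = 1) (hzero : ∀ x : ℝ, x ≤ -m → ξ x = 0)
    (Ψ : ℝ → ℝ) (hΨ : ∀ x : ℝ, Ψ x = ξ (x + m) - ξ (x - m))
    (a : ℝ) (ha : 0 < a) (n₁ n₂ : ℕ) (hn₁ : 1 ≤ n₁) (hn₂ : 1 ≤ n₂) (F : ℝ → ℝ → ℝ) :
    ∀ y : ℝ, 0 ≤ y → y < a →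
      ∑ k ∈ Finset.range (n₁ + 1), ∑ l ∈ Finset.range (n₂ + 1),
        F ((k : ℝ) / n₁ * (a - y)) ((l : ℝ) / n₂ * (a - 0)) *
          Ψ ((2 * m * n₁ / (a - y)) * (0 - (k : ℝ) / n₁ * (a - y))) *
          Ψ ((2 * m * n₂ / (a - 0)) * (y - (l : ℝ) / n₂ * (a - 0)))
      = ∑ l ∈ Finset.range (n₂ + 1),
          F 0 ((l : ℝ) / n₂ * (a - 0)) *
            Ψ ((2 * m * n₂ / (a - 0)) * (y - (l : ℝ) / n₂ * (a - 0))) := by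
  intro y hy hya
  have hay : a - y ≠ 0 := by linarith
  have hn₁' : (n₁ : ℝ) ≠ 0 := Nat.cast_ne_zero.mpr (by omega)
  rw [Finset.sum_eq_single_of_mem 0 (Finset.mem_range.mpr (by omega))]
  · apply Finset.sum_congr rfl
    intro l _
    have harg : (2 * m * (n₁ : ℝ) / (a - y)) * (0 - (0 : ℕ) / n₁ * (a - y)) = 0 := by
      push_cast; ring
    have hΨ0 : Ψ ((2 * m * (n₁ : ℝ) / (a - y)) * (0 - (0 : ℕ) / n₁ * (a - y))) = 1 := by
      rw [harg, hΨ, zero_add, zero_sub, hone m le_rfl, hzero (-m) le_rfl]; ring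
    rw [hΨ0]
    push_cast
    ring_nf
  · intro k hk hk0
    have hk1 : 1 ≤ k := by omega
    have harg : (2 * m * (n₁ : ℝ) / (a - y)) * (0 - (k : ℝ) / n₁ * (a - y)) = -(2 * m * k) := by
      field_simp
      ring
    have hΨk : Ψ ((2 * m * (n₁ : ℝ) / (a - y)) * (0 - (k : ℝ) / n₁ * (a - y))) = 0 := by
      rw [harg, hΨ]
      have hk1' : (1 : ℝ) ≤ k := by exact_mod_cast hk1
      rw [hzero _ (by nlinarith), hzero _ (by nlinarith)]
      ring
    rw [hΨk]
    simp [Finset.sum_congr]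
end

section
/- Let m > 0, let ξ be a sigmoidal function of class 𝒜(m) with Ψ(x) = ξ(x + m) − ξ(x − m), let a > 0, and let n₁, n₂ ≥ 1. Then for every (x, y) ∈ Δ with x < a and y < a, ∑_{k=0}^{n₁} ∑_{l=0}^{n₂} Ψ((2 m n₁ / (a − y)) · (x − xₖ)) · Ψ((2 m n₂ / (a − x)) · (y − y_l)) = 1, where xₖ = (k / n₁)(a − y) and y_l = (l / n₂)(a − x). -/
lemma one_dim_partition (m : ℝ) (hm : 0 < m) (ξ : ℝ → ℝ)
    (hone : ∀ x : ℝ, m ≤ x → ξ x = 1) (hzero : ∀ x : ℝ, x ≤ -m → ξ x = 0)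
    (Ψ : ℝ → ℝ) (hΨ : ∀ x : ℝ, Ψ x = ξ (x + m) - ξ (x - m))
    (n : ℕ) (hn : 1 ≤ n) (L x : ℝ) (hL : 0 < L) (hx0 : 0 ≤ x) (hxL : x ≤ L) :
    ∑ k ∈ Finset.range (n + 1), Ψ ((2 * m * n / L) * (x - (k : ℝ) / n * L)) = 1 := by
  have hn0 : (n : ℝ) ≠ 0 := Nat.cast_ne_zero.mpr (by omega)
  have hL0 : L ≠ 0 := ne_of_gt hL
  set c : ℝ := 2 * m * n / L with hc
  have key : ∀ k ∈ Finset.range (n + 1),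
      Ψ (c * (x - (k : ℝ) / n * L)) =
        ξ (c * x - 2 * m * k + m) - ξ (c * x - 2 * m * (k + 1) + m) := by
    intro k _
    rw [hΨ]
    have h1 : c * (x - (k : ℝ) / n * L) = c * x - 2 * m * k := by
      rw [hc]; field_simp
    rw [h1]
    congr 1 <;> ring_nf
  rw [Finset.sum_congr rfl key]
  have := Finset.sum_range_sub' (fun k : ℕ => ξ (c * x - 2 * m * k + m)) (n + 1)
  push_cast at this ⊢
  rw [this]
  have hcx0 : 0 ≤ c * x := by
    apply mul_nonneg _ hx0
    positivity
  have h0 : ξ (c * x - 2 * m * 0 + m) = 1 := by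
    apply hone; linarith
  have hcxn : c * x ≤ 2 * m * n := by
    rw [hc, div_mul_eq_mul_div, div_le_iff₀ hL]
    nlinarith [mul_pos hm (show (0:ℝ) < n by positivity)]
  have hN : ξ (c * x - 2 * m * (n + 1) + m) = 0 := by
    apply hzero; push_cast; linarith
  rw [h0]
  push_cast at hN
  rw [hN]; ring

theorem bivariate_partition_of_unity (m : ℝ) (hm : 0 < m) (ξ : ℝ → ℝ) (hmono : Monotone ξ)
    (hone : ∀ x : ℝ, m ≤ x → ξ x = 1) (hzero : ∀ x : ℝ, x ≤ -m → ξ x = 0)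
    (Ψ : ℝ → ℝ) (hΨ : ∀ x : ℝ, Ψ x = ξ (x + m) - ξ (x - m))
    (a : ℝ) (ha : 0 < a) (n₁ n₂ : ℕ) (hn₁ : 1 ≤ n₁) (hn₂ : 1 ≤ n₂) :
    ∀ x y : ℝ, 0 ≤ x → 0 ≤ y → x + y ≤ a → x < a → y < a →
      ∑ k ∈ Finset.range (n₁ + 1), ∑ l ∈ Finset.range (n₂ + 1),
        Ψ ((2 * m * n₁ / (a - y)) * (x - (k : ℝ) / n₁ * (a - y))) *
          Ψ ((2 * m * n₂ / (a - x)) * (y - (l : ℝ) / n₂ * (a - x))) = 1 := by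
  intro x y hx0 hy0 hxy hxa hya
  have h1 : ∑ k ∈ Finset.range (n₁ + 1),
      Ψ ((2 * m * n₁ / (a - y)) * (x - (k : ℝ) / n₁ * (a - y))) = 1 :=
    one_dim_partition m hm ξ hone hzero Ψ hΨ n₁ hn₁ (a - y) x (by linarith) hx0 (by linarith)
  have h2 : ∑ l ∈ Finset.range (n₂ + 1),
      Ψ ((2 * m * n₂ / (a - x)) * (y - (l : ℝ) / n₂ * (a - x))) = 1 :=
    one_dim_partition m hm ξ hone hzero Ψ hΨ n₂ hn₂ (a - x) y (by linarith) hy0 (by linarith)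
  calc ∑ k ∈ Finset.range (n₁ + 1), ∑ l ∈ Finset.range (n₂ + 1),
        Ψ ((2 * m * n₁ / (a - y)) * (x - (k : ℝ) / n₁ * (a - y))) *
          Ψ ((2 * m * n₂ / (a - x)) * (y - (l : ℝ) / n₂ * (a - x)))
      = (∑ k ∈ Finset.range (n₁ + 1),
          Ψ ((2 * m * n₁ / (a - y)) * (x - (k : ℝ) / n₁ * (a - y)))) *
        (∑ l ∈ Finset.range (n₂ + 1),
          Ψ ((2 * m * n₂ / (a - x)) * (y - (l : ℝ) / n₂ * (a - x)))) := by
        rw [Finset.sum_mul]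
        exact Finset.sum_congr rfl fun k _ => (Finset.mul_sum _ _ _).symm
    _ = 1 := by rw [h1, h2, one_mul]
end

section
/- Let m > 0, let ξ be a sigmoidal function of class 𝒜(m) with Ψ(x) = ξ(x + m) − ξ(x − m), let a > 0, let n₁, n₂ ≥ 1, let F : ℝ² → ℝ, let (x, y) ∈ Δ with x < a and y < a, and let ε ≥ 0. If |F(u, v) − F(s, t)| ≤ ε for all (u, v), (s, t) ∈ [0, a] × [0, a] with |u − s| ≤ a/n₁ and |v − t| ≤ a/n₂, then |(P_{n₁,n₂} F)(x, y) − F(x, y)| ≤ ε. (In particular, ‖F − P_{n₁,n₂} F‖ ≤ ω(F, h₁, h₂) with h₁ = a/n₁ and h₂ = a/n₂, where ω denotes the bivariate modulus of continuity.) -/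
set_option maxHeartbeats 1600000 in
theorem P_error_bound (m : ℝ) (hm : 0 < m) (ξ : ℝ → ℝ) (hmono : Monotone ξ)
    (hone : ∀ x : ℝ, m ≤ x → ξ x = 1) (hzero : ∀ x : ℝ, x ≤ -m → ξ x = 0)
    (Ψ : ℝ → ℝ) (hΨ : ∀ x : ℝ, Ψ x = ξ (x + m) - ξ (x - m))
    (a : ℝ) (ha : 0 < a) (n₁ n₂ : ℕ) (hn₁ : 1 ≤ n₁) (hn₂ : 1 ≤ n₂) (F : ℝ → ℝ → ℝ)
    (x y : ℝ) (hx : 0 ≤ x) (hy : 0 ≤ y) (hxy : x + y ≤ a) (hxa : x < a) (hya : y < a)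
    (ε : ℝ) (hε : 0 ≤ ε)
    (hmod : ∀ u ∈ Set.Icc (0 : ℝ) a, ∀ v ∈ Set.Icc (0 : ℝ) a,
      ∀ s ∈ Set.Icc (0 : ℝ) a, ∀ t ∈ Set.Icc (0 : ℝ) a,
      |u - s| ≤ a / n₁ → |v - t| ≤ a / n₂ → |F u v - F s t| ≤ ε) :
    |(∑ k ∈ Finset.range (n₁ + 1), ∑ l ∈ Finset.range (n₂ + 1),
        F ((k : ℝ) / n₁ * (a - y)) ((l : ℝ) / n₂ * (a - x)) *
          Ψ ((2 * m * n₁ / (a - y)) * (x - (k : ℝ) / n₁ * (a - y))) *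
          Ψ ((2 * m * n₂ / (a - x)) * (y - (l : ℝ) / n₂ * (a - x)))) - F x y| ≤ ε := by
  have hay : 0 < a - y := by linarith
  have hax : 0 < a - x := by linarith
  have hay' : a - y ≠ 0 := hay.ne'
  have hax' : a - x ≠ 0 := hax.ne'
  have hn₁' : (0 : ℝ) < n₁ := by exact_mod_cast Nat.lt_of_lt_of_le Nat.zero_lt_one hn₁
  have hn₂' : (0 : ℝ) < n₂ := by exact_mod_cast Nat.lt_of_lt_of_le Nat.zero_lt_one hn₂
  have hn₁'' : (n₁ : ℝ) ≠ 0 := hn₁'.ne'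
  have hn₂'' : (n₂ : ℝ) ≠ 0 := hn₂'.ne'
  -- Ψ is nonnegative
  have hΨ0 : ∀ t, 0 ≤ Ψ t := by
    intro t
    rw [hΨ]
    have := hmono (show t - m ≤ t + m by linarith)
    linarith
  -- Ψ vanishes far from the node
  have key : ∀ (τ : ℝ) (c : ℕ), (1 : ℝ) ≤ |τ - c| → Ψ (2 * m * (τ - c)) = 0 := by
    intro τ c h
    rw [hΨ]
    rcases abs_cases (τ - (c : ℝ)) with ⟨he, _⟩ | ⟨he, _⟩
    · rw [he] at h
      rw [hone _ (by nlinarith), hone _ (by nlinarith)]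
      ring
    · rw [he] at h
      have : τ - (c : ℝ) ≤ -1 := by linarith
      rw [hzero _ (by nlinarith), hzero _ (by nlinarith)]
      ring
  -- partition of unity
  have sumΨ : ∀ (n : ℕ) (τ : ℝ), 0 ≤ τ → τ ≤ n →
      ∑ k ∈ Finset.range (n + 1), Ψ (2 * m * (τ - k)) = 1 := by
    intro n τ h0 h1
    have hcong : ∀ k ∈ Finset.range (n + 1), Ψ (2 * m * (τ - k)) =
        (fun j : ℕ => ξ (2 * m * (τ - j) + m)) k -
        (fun j : ℕ => ξ (2 * m * (τ - j) + m)) (k + 1) := by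
      intro k _
      rw [hΨ]
      simp only
      congr 2
      push_cast
      ring
    rw [Finset.sum_congr rfl hcong, Finset.sum_range_sub' (fun j : ℕ => ξ (2 * m * (τ - j) + m))]
    beta_reduce
    rw [hone _ (by push_cast; nlinarith), hzero _ (by push_cast; nlinarith)]
    ring
  set τ := (n₁ : ℝ) * x / (a - y) with hτdef
  set σ := (n₂ : ℝ) * y / (a - x) with hσdef
  have hτ0 : 0 ≤ τ := by positivity
  have hσ0 : 0 ≤ σ := by positivity
  have hτn : τ ≤ n₁ := by
    rw [hτdef, div_le_iff₀ hay]
    nlinarith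
  have hσn : σ ≤ n₂ := by
    rw [hσdef, div_le_iff₀ hax]
    nlinarith
  have harg1 : ∀ k : ℕ, (2 * m * (n₁ : ℝ) / (a - y)) * (x - (k : ℝ) / n₁ * (a - y))
      = 2 * m * (τ - k) := by
    intro k
    rw [hτdef]
    field_simp
  have harg2 : ∀ l : ℕ, (2 * m * (n₂ : ℝ) / (a - x)) * (y - (l : ℝ) / n₂ * (a - x))
      = 2 * m * (σ - l) := by
    intro l
    rw [hσdef]
    field_simp
  have hsum1 := sumΨ n₁ τ hτ0 hτn
  have hsum2 := sumΨ n₂ σ hσ0 hσn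
  simp_rw [harg1, harg2]
  -- rewrite F x y as a weighted sum
  have hFxy : F x y = ∑ k ∈ Finset.range (n₁ + 1), ∑ l ∈ Finset.range (n₂ + 1),
      F x y * Ψ (2 * m * (τ - k)) * Ψ (2 * m * (σ - l)) := by
    have h1 : ∀ k ∈ Finset.range (n₁ + 1),
        ∑ l ∈ Finset.range (n₂ + 1), F x y * Ψ (2 * m * (τ - k)) * Ψ (2 * m * (σ - l))
        = F x y * Ψ (2 * m * (τ - k)) := by
      intro k _
      rw [← Finset.mul_sum, hsum2, mul_one]
    rw [Finset.sum_congr rfl h1, ← Finset.mul_sum, hsum1, mul_one]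
  rw [hFxy]
  rw [← Finset.sum_sub_distrib]
  simp_rw [← Finset.sum_sub_distrib]
  -- per-term bound
  have hterm : ∀ k ∈ Finset.range (n₁ + 1), ∀ l ∈ Finset.range (n₂ + 1),
      |F ((k : ℝ) / n₁ * (a - y)) ((l : ℝ) / n₂ * (a - x)) * Ψ (2 * m * (τ - k)) *
          Ψ (2 * m * (σ - l)) -
        F x y * Ψ (2 * m * (τ - k)) * Ψ (2 * m * (σ - l))|
      ≤ ε * (Ψ (2 * m * (τ - k)) * Ψ (2 * m * (σ - l))) := by
    intro k hk l hl
    have hk' : (k : ℝ) ≤ n₁ := by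
      exact_mod_cast Nat.le_of_lt_succ (Finset.mem_range.mp hk)
    have hl' : (l : ℝ) ≤ n₂ := by
      exact_mod_cast Nat.le_of_lt_succ (Finset.mem_range.mp hl)
    have heq : F ((k : ℝ) / n₁ * (a - y)) ((l : ℝ) / n₂ * (a - x)) * Ψ (2 * m * (τ - k)) *
          Ψ (2 * m * (σ - l)) - F x y * Ψ (2 * m * (τ - k)) * Ψ (2 * m * (σ - l))
        = (F ((k : ℝ) / n₁ * (a - y)) ((l : ℝ) / n₂ * (a - x)) - F x y) *
          (Ψ (2 * m * (τ - k)) * Ψ (2 * m * (σ - l))) := by ring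
    rw [heq, abs_mul, abs_of_nonneg (mul_nonneg (hΨ0 _) (hΨ0 _))]
    by_cases hz : Ψ (2 * m * (τ - k)) * Ψ (2 * m * (σ - l)) = 0
    · rw [hz]
      simp
    · have hΨk : Ψ (2 * m * (τ - k)) ≠ 0 := fun h => hz (by rw [h]; ring)
      have hΨl : Ψ (2 * m * (σ - l)) ≠ 0 := fun h => hz (by rw [h]; ring)
      have hτk : |τ - (k : ℝ)| < 1 := by
        by_contra h
        exact hΨk (key τ k (le_of_not_gt h))
      have hσl : |σ - (l : ℝ)| < 1 := by
        by_contra h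
        exact hΨl (key σ l (le_of_not_gt h))
      -- node memberships
      have hu0 : (0 : ℝ) ≤ (k : ℝ) / n₁ * (a - y) := by positivity
      have hua : (k : ℝ) / n₁ * (a - y) ≤ a := by
        have h1 : (k : ℝ) / n₁ ≤ 1 := by rw [div_le_one hn₁']; exact hk'
        have h2 := mul_le_mul_of_nonneg_right h1 hay.le
        rw [one_mul] at h2
        linarith
      have hv0 : (0 : ℝ) ≤ (l : ℝ) / n₂ * (a - x) := by positivity
      have hva : (l : ℝ) / n₂ * (a - x) ≤ a := by
        have h1 : (l : ℝ) / n₂ ≤ 1 := by rw [div_le_one hn₂']; exact hl'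
        have h2 := mul_le_mul_of_nonneg_right h1 hax.le
        rw [one_mul] at h2
        linarith
      -- distance bounds
      have hdist1 : |(k : ℝ) / n₁ * (a - y) - x| ≤ a / n₁ := by
        have heq2 : (k : ℝ) / n₁ * (a - y) - x = -((a - y) / n₁ * (τ - k)) := by
          rw [hτdef]; field_simp; ring
        rw [heq2, abs_neg, abs_mul, abs_of_nonneg (by positivity : (0:ℝ) ≤ (a - y) / n₁),
          div_mul_eq_mul_div]
        apply div_le_div_of_nonneg_right ?_ hn₁'.le
        have h2 := mul_le_mul_of_nonneg_left hτk.le hay.le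
        rw [mul_one] at h2
        linarith
      have hdist2 : |(l : ℝ) / n₂ * (a - x) - y| ≤ a / n₂ := by
        have heq2 : (l : ℝ) / n₂ * (a - x) - y = -((a - x) / n₂ * (σ - l)) := by
          rw [hσdef]; field_simp; ring
        rw [heq2, abs_neg, abs_mul, abs_of_nonneg (by positivity : (0:ℝ) ≤ (a - x) / n₂),
          div_mul_eq_mul_div]
        apply div_le_div_of_nonneg_right ?_ hn₂'.le
        have h2 := mul_le_mul_of_nonneg_left hσl.le hax.le
        rw [mul_one] at h2
        linarith
      have hF := hmod _ ⟨hu0, hua⟩ _ ⟨hv0, hva⟩ x ⟨hx, hxa.le⟩ y ⟨hy, hya.le⟩ hdist1 hdist2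
      exact mul_le_mul_of_nonneg_right hF (mul_nonneg (hΨ0 _) (hΨ0 _))
  refine le_trans (Finset.abs_sum_le_sum_abs _ _) ?_
  refine le_trans (Finset.sum_le_sum fun k _ => Finset.abs_sum_le_sum_abs _ _) ?_
  refine le_trans (Finset.sum_le_sum fun k hk => Finset.sum_le_sum fun l hl => hterm k hk l hl) ?_
  have h1 : ∀ k ∈ Finset.range (n₁ + 1),
      ∑ l ∈ Finset.range (n₂ + 1), ε * (Ψ (2 * m * (τ - k)) * Ψ (2 * m * (σ - l)))
      = ε * Ψ (2 * m * (τ - k)) := by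
    intro k _
    rw [show (∑ l ∈ Finset.range (n₂ + 1), ε * (Ψ (2 * m * (τ - k)) * Ψ (2 * m * (σ - l))))
        = ε * Ψ (2 * m * (τ - k)) * ∑ l ∈ Finset.range (n₂ + 1), Ψ (2 * m * (σ - l)) from by
      rw [Finset.mul_sum]; exact Finset.sum_congr rfl fun l _ => by ring]
    rw [hsum2, mul_one]
  rw [Finset.sum_congr rfl h1, ← Finset.mul_sum, hsum1, mul_one]
end

section
/- Let m > 0, let ξ be a sigmoidal function of class 𝒜(m) with Ψ(x) = ξ(x + m) − ξ(x − m), let a > 0, let n₁, n₂ ≥ 1, and let F : ℝ² → ℝ. Define the Generalized Boolean Sum operator B_{n₁,n₂} F = S^x_{n₁} F + S^y_{n₂} F − P_{n₁,n₂} F. Then for every point (x, y) on the boundary ∂Δ of the triangle with 0 < x < a and 0 < y < a or with y = 0 and 0 ≤ x < a or with x = 0 and 0 ≤ y < a (i.e., every boundary point where all three operators are given by their defining sums), (B_{n₁,n₂} F)(x, y) = F(x, y). -/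
theorem GBS_interpolates_boundary (m : ℝ) (hm : 0 < m) (ξ : ℝ → ℝ) (hmono : Monotone ξ)
    (hone : ∀ x : ℝ, m ≤ x → ξ x = 1) (hzero : ∀ x : ℝ, x ≤ -m → ξ x = 0)
    (Ψ : ℝ → ℝ) (hΨ : ∀ x : ℝ, Ψ x = ξ (x + m) - ξ (x - m))
    (a : ℝ) (ha : 0 < a) (n₁ n₂ : ℕ) (hn₁ : 1 ≤ n₁) (hn₂ : 1 ≤ n₂) (F : ℝ → ℝ → ℝ) :
    ∀ x y : ℝ, 0 ≤ x → 0 ≤ y → x + y ≤ a →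
      (x = 0 ∨ y = 0 ∨ x + y = a) →
      ((0 < x ∧ x < a ∧ 0 < y ∧ y < a) ∨ (y = 0 ∧ 0 ≤ x ∧ x < a) ∨
        (x = 0 ∧ 0 ≤ y ∧ y < a)) →
      (∑ k ∈ Finset.range (n₁ + 1),
          F ((k : ℝ) / n₁ * (a - y)) y *
            Ψ ((2 * m * n₁ / (a - y)) * (x - (k : ℝ) / n₁ * (a - y))))
        + (∑ l ∈ Finset.range (n₂ + 1),
            F x ((l : ℝ) / n₂ * (a - x)) *
              Ψ ((2 * m * n₂ / (a - x)) * (y - (l : ℝ) / n₂ * (a - x))))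
        - (∑ k ∈ Finset.range (n₁ + 1), ∑ l ∈ Finset.range (n₂ + 1),
            F ((k : ℝ) / n₁ * (a - y)) ((l : ℝ) / n₂ * (a - x)) *
              Ψ ((2 * m * n₁ / (a - y)) * (x - (k : ℝ) / n₁ * (a - y))) *
              Ψ ((2 * m * n₂ / (a - x)) * (y - (l : ℝ) / n₂ * (a - x))))
      = F x y := by
  have hΨ0 : Ψ 0 = 1 := by
    rw [hΨ, zero_add, zero_sub, hone m le_rfl, hzero (-m) le_rfl]; ring
  have hΨbig : ∀ t : ℝ, 2 * m ≤ t → Ψ t = 0 := by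
    intro t ht; rw [hΨ, hone _ (by linarith), hone _ (by linarith)]; ring
  have hΨsmall : ∀ t : ℝ, t ≤ -(2 * m) → Ψ t = 0 := by
    intro t ht; rw [hΨ, hzero _ (by linarith), hzero _ (by linarith)]; ring
  have hn₁' : (n₁ : ℝ) ≠ 0 := Nat.cast_ne_zero.mpr (by omega)
  have hn₂' : (n₂ : ℝ) ≠ 0 := Nat.cast_ne_zero.mpr (by omega)
  intro x y hx hy hxy hbd hcase
  rcases hcase with ⟨hx0, hxa, hy0, hya⟩ | ⟨hy0, hx0, hxa⟩ | ⟨hx0, hy0, hya⟩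
  · -- interior case: must have x + y = a
    have hsum : x + y = a := by
      rcases hbd with h | h | h
      · exact absurd h.symm (ne_of_lt hx0)
      · exact absurd h.symm (ne_of_lt hy0)
      · exact h
    have hay : a - y = x := by linarith
    have hax : a - x = y := by linarith
    have hxne : x ≠ 0 := ne_of_gt hx0
    have hyne : y ≠ 0 := ne_of_gt hy0
    have hSx : (∑ k ∈ Finset.range (n₁ + 1),
        F ((k : ℝ) / n₁ * (a - y)) y *
          Ψ ((2 * m * n₁ / (a - y)) * (x - (k : ℝ) / n₁ * (a - y)))) = F x y := by
      rw [Finset.sum_eq_single n₁]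
      · rw [hay, div_self hn₁', one_mul]
        have h0 : 2 * m * (n₁ : ℝ) / x * (x - x) = 0 := by ring
        rw [h0, hΨ0, mul_one]
      · intro k hk hkne
        have hk' : k < n₁ := by simp at hk; omega
        have hk'' : (k : ℝ) + 1 ≤ n₁ := by exact_mod_cast hk'
        have harg : 2 * m * (n₁ : ℝ) / (a - y) * (x - (k : ℝ) / n₁ * (a - y))
            = 2 * m * ((n₁ : ℝ) - k) := by rw [hay]; field_simp
        rw [harg, hΨbig (2 * m * ((n₁ : ℝ) - k)) (by nlinarith), mul_zero]
      · intro h; exact absurd (Finset.mem_range.mpr (by omega)) h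
    have hSy : (∑ l ∈ Finset.range (n₂ + 1),
        F x ((l : ℝ) / n₂ * (a - x)) *
          Ψ ((2 * m * n₂ / (a - x)) * (y - (l : ℝ) / n₂ * (a - x)))) = F x y := by
      rw [Finset.sum_eq_single n₂]
      · rw [hax, div_self hn₂', one_mul]
        have h0 : 2 * m * (n₂ : ℝ) / y * (y - y) = 0 := by ring
        rw [h0, hΨ0, mul_one]
      · intro l hl hlne
        have hl' : l < n₂ := by simp at hl; omega
        have hl'' : (l : ℝ) + 1 ≤ n₂ := by exact_mod_cast hl'
        have harg : 2 * m * (n₂ : ℝ) / (a - x) * (y - (l : ℝ) / n₂ * (a - x))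
            = 2 * m * ((n₂ : ℝ) - l) := by rw [hax]; field_simp
        rw [harg, hΨbig (2 * m * ((n₂ : ℝ) - l)) (by nlinarith), mul_zero]
      · intro h; exact absurd (Finset.mem_range.mpr (by omega)) h
    have hP : (∑ k ∈ Finset.range (n₁ + 1), ∑ l ∈ Finset.range (n₂ + 1),
        F ((k : ℝ) / n₁ * (a - y)) ((l : ℝ) / n₂ * (a - x)) *
          Ψ ((2 * m * n₁ / (a - y)) * (x - (k : ℝ) / n₁ * (a - y))) *
          Ψ ((2 * m * n₂ / (a - x)) * (y - (l : ℝ) / n₂ * (a - x)))) = F x y := by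
      rw [Finset.sum_eq_single n₁]
      · rw [Finset.sum_eq_single n₂]
        · rw [hay, hax, div_self hn₁', div_self hn₂', one_mul, one_mul]
          have h1 : 2 * m * (n₁ : ℝ) / x * (x - x) = 0 := by ring
          have h2 : 2 * m * (n₂ : ℝ) / y * (y - y) = 0 := by ring
          rw [h1, h2, hΨ0, mul_one, mul_one]
        · intro l hl hlne
          have hl' : l < n₂ := by simp at hl; omega
          have hl'' : (l : ℝ) + 1 ≤ n₂ := by exact_mod_cast hl'
          have harg : 2 * m * (n₂ : ℝ) / (a - x) * (y - (l : ℝ) / n₂ * (a - x))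
              = 2 * m * ((n₂ : ℝ) - l) := by rw [hax]; field_simp
          rw [harg, hΨbig (2 * m * ((n₂ : ℝ) - l)) (by nlinarith), mul_zero]
        · intro h; exact absurd (Finset.mem_range.mpr (by omega)) h
      · intro k hk hkne
        apply Finset.sum_eq_zero
        intro l _
        have hk' : k < n₁ := by simp at hk; omega
        have hk'' : (k : ℝ) + 1 ≤ n₁ := by exact_mod_cast hk'
        have harg : 2 * m * (n₁ : ℝ) / (a - y) * (x - (k : ℝ) / n₁ * (a - y))
            = 2 * m * ((n₁ : ℝ) - k) := by rw [hay]; field_simp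
        rw [harg, hΨbig (2 * m * ((n₁ : ℝ) - k)) (by nlinarith), mul_zero, zero_mul]
      · intro h; exact absurd (Finset.mem_range.mpr (by omega)) h
    rw [hSx, hSy, hP]; ring
  · -- y = 0 case
    subst hy0
    have hax : a - x ≠ 0 := sub_ne_zero.mpr (ne_of_lt hxa).symm
    have hSy : (∑ l ∈ Finset.range (n₂ + 1),
        F x ((l : ℝ) / n₂ * (a - x)) *
          Ψ ((2 * m * n₂ / (a - x)) * ((0:ℝ) - (l : ℝ) / n₂ * (a - x)))) = F x 0 := by
      rw [Finset.sum_eq_single 0]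
      · simp only [Nat.cast_zero, zero_div, zero_mul, mul_zero, sub_zero, hΨ0, mul_one]
      · intro l hl hlne
        have hl' : 1 ≤ l := Nat.one_le_iff_ne_zero.mpr hlne
        have hl'' : (1 : ℝ) ≤ l := by exact_mod_cast hl'
        have harg : 2 * m * (n₂ : ℝ) / (a - x) * ((0:ℝ) - (l : ℝ) / n₂ * (a - x))
            = -(2 * m * l) := by field_simp; ring
        rw [harg, hΨsmall (-(2 * m * (l:ℝ))) (by nlinarith), mul_zero]
      · intro h; exact absurd (Finset.mem_range.mpr (by omega)) h
    have hP : (∑ k ∈ Finset.range (n₁ + 1), ∑ l ∈ Finset.range (n₂ + 1),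
        F ((k : ℝ) / n₁ * (a - 0)) ((l : ℝ) / n₂ * (a - x)) *
          Ψ ((2 * m * n₁ / (a - 0)) * (x - (k : ℝ) / n₁ * (a - 0))) *
          Ψ ((2 * m * n₂ / (a - x)) * ((0:ℝ) - (l : ℝ) / n₂ * (a - x))))
        = (∑ k ∈ Finset.range (n₁ + 1),
            F ((k : ℝ) / n₁ * (a - 0)) 0 *
              Ψ ((2 * m * n₁ / (a - 0)) * (x - (k : ℝ) / n₁ * (a - 0)))) := by
      apply Finset.sum_congr rfl
      intro k _
      rw [Finset.sum_eq_single 0]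
      · simp only [Nat.cast_zero, zero_div, zero_mul, mul_zero, sub_zero, hΨ0, mul_one]
      · intro l hl hlne
        have hl' : 1 ≤ l := Nat.one_le_iff_ne_zero.mpr hlne
        have hl'' : (1 : ℝ) ≤ l := by exact_mod_cast hl'
        have harg : 2 * m * (n₂ : ℝ) / (a - x) * ((0:ℝ) - (l : ℝ) / n₂ * (a - x))
            = -(2 * m * l) := by field_simp; ring
        rw [harg, hΨsmall (-(2 * m * (l:ℝ))) (by nlinarith), mul_zero]
      · intro h; exact absurd (Finset.mem_range.mpr (by omega)) h
    rw [hSy, hP]; ring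
  · -- x = 0 case
    subst hx0
    have hay : a - y ≠ 0 := sub_ne_zero.mpr (ne_of_lt hya).symm
    have hSx : (∑ k ∈ Finset.range (n₁ + 1),
        F ((k : ℝ) / n₁ * (a - y)) y *
          Ψ ((2 * m * n₁ / (a - y)) * ((0:ℝ) - (k : ℝ) / n₁ * (a - y)))) = F 0 y := by
      rw [Finset.sum_eq_single 0]
      · simp only [Nat.cast_zero, zero_div, zero_mul, mul_zero, sub_zero, hΨ0, mul_one]
      · intro k hk hkne
        have hk' : 1 ≤ k := Nat.one_le_iff_ne_zero.mpr hkne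
        have hk'' : (1 : ℝ) ≤ k := by exact_mod_cast hk'
        have harg : 2 * m * (n₁ : ℝ) / (a - y) * ((0:ℝ) - (k : ℝ) / n₁ * (a - y))
            = -(2 * m * k) := by field_simp; ring
        rw [harg, hΨsmall (-(2 * m * (k:ℝ))) (by nlinarith), mul_zero]
      · intro h; exact absurd (Finset.mem_range.mpr (by omega)) h
    have hP : (∑ k ∈ Finset.range (n₁ + 1), ∑ l ∈ Finset.range (n₂ + 1),
        F ((k : ℝ) / n₁ * (a - y)) ((l : ℝ) / n₂ * (a - 0)) *
          Ψ ((2 * m * n₁ / (a - y)) * ((0:ℝ) - (k : ℝ) / n₁ * (a - y))) *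
          Ψ ((2 * m * n₂ / (a - 0)) * (y - (l : ℝ) / n₂ * (a - 0))))
        = (∑ l ∈ Finset.range (n₂ + 1),
            F 0 ((l : ℝ) / n₂ * (a - 0)) *
              Ψ ((2 * m * n₂ / (a - 0)) * (y - (l : ℝ) / n₂ * (a - 0)))) := by
      rw [Finset.sum_eq_single 0]
      · apply Finset.sum_congr rfl
        intro l _
        simp only [Nat.cast_zero, zero_div, zero_mul, mul_zero, sub_zero, hΨ0]
        ring
      · intro k hk hkne
        apply Finset.sum_eq_zero
        intro l _
        have hk' : 1 ≤ k := Nat.one_le_iff_ne_zero.mpr hkne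
        have hk'' : (1 : ℝ) ≤ k := by exact_mod_cast hk'
        have harg : 2 * m * (n₁ : ℝ) / (a - y) * ((0:ℝ) - (k : ℝ) / n₁ * (a - y))
            = -(2 * m * k) := by field_simp; ring
        rw [harg, hΨsmall (-(2 * m * (k:ℝ))) (by nlinarith), mul_zero, zero_mul]
      · intro h; exact absurd (Finset.mem_range.mpr (by omega)) h
    rw [hSx, hP]; ring
end
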